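/- Let G be a finite group and M a G-lattice with flasque resolution 0 → M → P → F → 0 (P permutation, F flasque). Then H^1(G,F) ≅ Ш²(G,M). Consequently, if M is equivalent to a direct summand of a quasi-permutation G-lattice, then Ш²(H,M) = 0 for all subgroups H ≤ G. -/

import Mathlib

open Function

section Core
variable (G : Type) [Group G]

/-- A map is `G`-equivariant. -/
def IsEquivMapP {M N : Type} [AddCommGroup M] [AddCommGroup N]
    [DistribMulAction G M] [DistribMulAction G N] (f : M → N) : Prop :=
  ∀ (g : G) (m : M), f (g • m) = g • f m

/-- `M` is a permutation `G`-lattice: it has a finite `ℤ`-basis permuted by `G`. -/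
def IsPermLat (M : Type) [AddCommGroup M] [DistribMulAction G M] : Prop :=
  ∃ (ι : Type) (_ : Fintype ι) (b : Module.Basis ι ℤ M) (σ : G → ι → ι),
    ∀ (g : G) (i : ι), g • (b i : M) = b (σ g i)

/-- `M` is a lattice: finitely generated and free over `ℤ`. -/
def IsLat (M : Type) [AddCommGroup M] : Prop := Module.Free ℤ M ∧ Module.Finite ℤ M

/-- A short exact sequence `0 → M → E → P → 0` of `G`-modules. -/
def ShortExactG (M E P : Type) [AddCommGroup M] [AddCommGroup E] [AddCommGroup P]
    [DistribMulAction G M] [DistribMulAction G E] [DistribMulAction G P] : Prop :=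
  ∃ (i : M →+ E) (p : E →+ P), IsEquivMapP G i ∧ IsEquivMapP G p ∧
    Injective i ∧ Surjective p ∧ i.range = p.ker

/-- Colliot-Thélène–Sansuc equivalence of `G`-lattices. -/
def LatEquiv (M N : Type) [AddCommGroup M] [AddCommGroup N]
    [DistribMulAction G M] [DistribMulAction G N] : Prop :=
  ∃ (E : Type) (_ : AddCommGroup E) (_ : DistribMulAction G E)
    (P : Type) (_ : AddCommGroup P) (_ : DistribMulAction G P)
    (Q : Type) (_ : AddCommGroup Q) (_ : DistribMulAction G Q),
    IsLat E ∧ IsPermLat G P ∧ IsPermLat G Q ∧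
    ShortExactG G M E P ∧ ShortExactG G N E Q

/-- `M` is stably permutation. -/
def IsStablyPerm (M : Type) [AddCommGroup M] [DistribMulAction G M] : Prop :=
  ∃ (P : Type) (_ : AddCommGroup P) (_ : DistribMulAction G P)
    (Q : Type) (_ : AddCommGroup Q) (_ : DistribMulAction G Q),
    IsPermLat G P ∧ IsPermLat G Q ∧
    ∃ e : (M × P) ≃+ Q, IsEquivMapP G e

/-- `M` is permutation projective: a direct summand of a permutation lattice. -/
def IsPermProj (M : Type) [AddCommGroup M] [DistribMulAction G M] : Prop :=
  ∃ (P : Type) (_ : AddCommGroup P) (_ : DistribMulAction G P), IsPermLat G P ∧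
    ∃ (i : M →+ P) (r : P →+ M), IsEquivMapP G i ∧ IsEquivMapP G r ∧ ∀ m, r (i m) = m

/-- `M` is quasi-permutation: it embeds into a permutation lattice with permutation quotient. -/
def IsQuasiPerm (M : Type) [AddCommGroup M] [DistribMulAction G M] : Prop :=
  ∃ (P : Type) (_ : AddCommGroup P) (_ : DistribMulAction G P)
    (Q : Type) (_ : AddCommGroup Q) (_ : DistribMulAction G Q),
    IsPermLat G P ∧ IsPermLat G Q ∧ ShortExactG G M P Q

variable (M : Type) [AddCommGroup M] [DistribMulAction G M]

/-- 1-cocycles. -/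
def Z1 : AddSubgroup (G → M) where
  carrier := {f | ∀ g h : G, f (g * h) = g • f h + f g}
  zero_mem' := by intro g h; simp
  add_mem' := by
    intro f f' hf hf' g h
    simp only [Pi.add_apply, hf g h, hf' g h, smul_add]; abel
  neg_mem' := by
    intro f hf g h
    simp only [Pi.neg_apply, hf g h, smul_neg]; abel

/-- The coboundary homomorphism. -/
def coboundHom : M →+ Z1 G M where
  toFun m := ⟨fun g => g • m - m, by intro g h; simp only [mul_smul, smul_sub]; abel⟩
  map_zero' := by apply Subtype.ext; funext g; simp
  map_add' := by
    intro a b; apply Subtype.ext; funext g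
    show g • (a + b) - (a + b) = (g • a - a) + (g • b - b)
    simp only [smul_add]; abel

/-- 1-coboundaries. -/
def B1 : AddSubgroup (Z1 G M) := (coboundHom G M).range

/-- First group cohomology `H¹(G, M)`. -/
abbrev H1 := Z1 G M ⧸ B1 G M

/-- Restriction of cocycles to a subgroup. -/
def resZ1 (H : Subgroup G) : Z1 G M →+ Z1 H M where
  toFun f := ⟨fun h => f.1 h, by
    intro a b
    have := f.2 (a : G) (b : G)
    exact this⟩
  map_zero' := rfl
  map_add' := fun _ _ => rfl

/-- Restriction on `H¹`. -/
def resH1 (H : Subgroup G) : H1 G M →+ H1 H M :=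
  QuotientAddGroup.map _ _ (resZ1 G M H) (by
    rintro _ ⟨m, rfl⟩
    exact ⟨m, Subtype.ext rfl⟩)

/-- `Ш¹(G, M)`. -/
def Sha1 : AddSubgroup (H1 G M) :=
  ⨅ g : G, (resH1 G M (Subgroup.zpowers g)).ker

/-- `M` is coflasque: `H¹(H, M) = 0` for all subgroups `H ≤ G`. -/
def IsCoflasque : Prop := ∀ H : Subgroup G, ∀ x y : H1 H M, x = y

end Core

section Core2
variable (G : Type) [Group G] (M : Type) [AddCommGroup M] [DistribMulAction G M]

/-- 2-cocycles. -/
def Z2 : AddSubgroup (G → G → M) where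
  carrier := {f | ∀ g h k : G, g • f h k - f (g * h) k + f g (h * k) - f g h = 0}
  zero_mem' := by intro g h k; simp
  add_mem' := by
    intro f f' hf hf' g h k
    have h1 := hf g h k; have h2 := hf' g h k
    simp only [Pi.add_apply, smul_add]
    calc g • f h k + g • f' h k - (f (g * h) k + f' (g * h) k) +
          (f g (h * k) + f' g (h * k)) - (f g h + f' g h)
        = (g • f h k - f (g * h) k + f g (h * k) - f g h) +
          (g • f' h k - f' (g * h) k + f' g (h * k) - f' g h) := by abel
      _ = 0 := by rw [h1, h2, add_zero]
  neg_mem' := by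
    intro f hf g h k
    have h1 := hf g h k
    simp only [Pi.neg_apply, smul_neg]
    calc -(g • f h k) - -f (g * h) k + -f g (h * k) - -f g h
        = -(g • f h k - f (g * h) k + f g (h * k) - f g h) := by abel
      _ = 0 := by rw [h1, neg_zero]

/-- The 2-coboundary homomorphism. -/
def cobound2Hom : (G → M) →+ Z2 G M where
  toFun u := ⟨fun g h => g • u h - u (g * h) + u g, by
    intro g h k
    simp only [mul_smul, smul_sub, smul_add, mul_assoc]
    abel⟩
  map_zero' := by apply Subtype.ext; funext g h; simp
  map_add' := by
    intro a b; apply Subtype.ext; funext g h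
    show g • (a h + b h) - (a (g * h) + b (g * h)) + (a g + b g)
        = (g • a h - a (g * h) + a g) + (g • b h - b (g * h) + b g)
    simp only [smul_add]; abel

/-- 2-coboundaries. -/
def B2 : AddSubgroup (Z2 G M) := (cobound2Hom G M).range

/-- Second group cohomology `H²(G, M)`. -/
abbrev H2 := Z2 G M ⧸ B2 G M

/-- Restriction of 2-cocycles to a subgroup. -/
def resZ2 (H : Subgroup G) : Z2 G M →+ Z2 H M where
  toFun f := ⟨fun a b => f.1 a b, by
    intro a b c
    have := f.2 (a : G) (b : G) (c : G)
    exact this⟩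
  map_zero' := rfl
  map_add' := fun _ _ => rfl

/-- Restriction on `H²`. -/
def resH2 (H : Subgroup G) : H2 G M →+ H2 H M :=
  QuotientAddGroup.map _ _ (resZ2 G M H) (by
    rintro _ ⟨u, rfl⟩
    exact ⟨fun h : H => u (h : G), Subtype.ext rfl⟩)

/-- `Ш²(G, M)`. -/
def Sha2 : AddSubgroup (H2 G M) :=
  ⨅ g : G, (resH2 G M (Subgroup.zpowers g)).ker

/-- The subgroup `2M`. -/
def twoSub : AddSubgroup M :=
  (AddMonoidHom.mk' (fun m : M => (2 : ℤ) • m) (by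
    intro a b
    show (2 : ℤ) • (a + b) = (2 : ℤ) • a + (2 : ℤ) • b
    rw [smul_add])).range

/-- `M/2M`. -/
abbrev ModTwo := M ⧸ twoSub M

noncomputable instance : SMul G (ModTwo M) :=
  ⟨fun g => QuotientAddGroup.map _ _ (DistribMulAction.toAddMonoidHom M g) (by
    rintro _ ⟨m, rfl⟩
    refine ⟨g • m, ?_⟩
    show (2 : ℤ) • (g • m) = g • ((2 : ℤ) • m)
    rw [smul_comm])⟩

theorem modTwo_smul_mk (g : G) (m : M) :
    g • (QuotientAddGroup.mk m : ModTwo M) = QuotientAddGroup.mk (g • m) := rfl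

noncomputable instance : DistribMulAction G (ModTwo M) where
  one_smul x := by
    obtain ⟨m, rfl⟩ := QuotientAddGroup.mk_surjective x
    rw [modTwo_smul_mk, one_smul]
  mul_smul g h x := by
    obtain ⟨m, rfl⟩ := QuotientAddGroup.mk_surjective x
    rw [modTwo_smul_mk, modTwo_smul_mk, modTwo_smul_mk, mul_smul]
  smul_zero g := map_zero (QuotientAddGroup.map _ _ (DistribMulAction.toAddMonoidHom M g) _)
  smul_add g x y := map_add (QuotientAddGroup.map _ _ (DistribMulAction.toAddMonoidHom M g) _) x y

variable [Finite G]

/-- Kernel of the norm map (for a finite group). -/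
def normKer : AddSubgroup M where
  carrier := {x | ∑ᶠ g : G, g • x = 0}
  zero_mem' := by simp
  add_mem' := by
    intro x y hx hy
    have hx' : ∑ᶠ g : G, g • x = 0 := hx
    have hy' : ∑ᶠ g : G, g • y = 0 := hy
    show ∑ᶠ g : G, g • (x + y) = 0
    simp only [smul_add]
    rw [finsum_add_distrib (Set.toFinite _) (Set.toFinite _), hx', hy', add_zero]
  neg_mem' := by
    intro x hx
    have hx' : ∑ᶠ g : G, g • x = 0 := hx
    show ∑ᶠ g : G, g • (-x) = 0
    simp only [smul_neg]
    rw [finsum_neg_distrib, hx', neg_zero]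

/-- The subgroup generated by elements `g • m - m`. -/
def augSub : AddSubgroup M := AddSubgroup.closure {x | ∃ (g : G) (m : M), x = g • m - m}

/-- Tate cohomology `Ĥ⁻¹(G, M)` (for a finite group `G`). -/
abbrev TateNeg1 := normKer G M ⧸ ((augSub G M).addSubgroupOf (normKer G M))

/-- `M` is flasque: `Ĥ⁻¹(H, M) = 0` for all subgroups `H ≤ G`. -/
def IsFlasque : Prop := ∀ H : Subgroup G, ∀ x y : TateNeg1 H M, x = y

end Core2

section Core3
variable (G : Type) [Group G]

/-- `M` is equivalent to a direct summand of a quasi-permutation `G`-lattice. -/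
def IsEquivSummandQP (M : Type) [AddCommGroup M] [DistribMulAction G M] : Prop :=
  ∃ (S : Type) (_ : AddCommGroup S) (_ : DistribMulAction G S)
    (D : Type) (_ : AddCommGroup D) (_ : DistribMulAction G D)
    (D' : Type) (_ : AddCommGroup D') (_ : DistribMulAction G D'),
    IsLat S ∧ IsQuasiPerm G S ∧ (∃ e : (D × D') ≃+ S, IsEquivMapP G e) ∧
    LatEquiv G M D

end Core3

section Tensor
open TensorProduct
variable (G : Type) [Group G] (M : Type) [AddCommGroup M] [DistribMulAction G M]

/-- The action of `g : G` as a `ℤ`-linear map. -/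
def gLin (g : G) : M →ₗ[ℤ] M := (DistribMulAction.toAddMonoidHom M g).toIntLinearMap

noncomputable instance tensorSMul : SMul G (M ⊗[ℤ] M) :=
  ⟨fun g => TensorProduct.map (gLin G M g) (gLin G M g)⟩

theorem tsmul_def (g : G) (x : M ⊗[ℤ] M) :
    g • x = TensorProduct.map (gLin G M g) (gLin G M g) x := rfl

theorem gLin_one : gLin G M 1 = LinearMap.id := by
  ext m; show (1 : G) • m = m; rw [one_smul]

theorem gLin_mul (g h : G) : gLin G M (g * h) = (gLin G M g).comp (gLin G M h) := by
  ext m; show (g * h) • m = g • h • m; rw [mul_smul]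

noncomputable instance tensorAct : DistribMulAction G (M ⊗[ℤ] M) where
  one_smul x := by rw [tsmul_def, gLin_one, TensorProduct.map_id]; rfl
  mul_smul g h x := by
    rw [tsmul_def, tsmul_def, tsmul_def, gLin_mul, TensorProduct.map_comp]; rfl
  smul_zero g := map_zero _
  smul_add g x y := map_add _ x y

/-- Generators of the symmetric relation. -/
def symSpan : Submodule ℤ (M ⊗[ℤ] M) :=
  Submodule.span ℤ {x | ∃ a b : M, x = a ⊗ₜ[ℤ] b - b ⊗ₜ[ℤ] a}

/-- Generators of the wedge relation. -/
def wedSpan : Submodule ℤ (M ⊗[ℤ] M) :=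
  Submodule.span ℤ {x | ∃ a : M, x = a ⊗ₜ[ℤ] a}

/-- The second symmetric power `Sym²M`. -/
abbrev Sym2Q := (M ⊗[ℤ] M) ⧸ symSpan M

/-- The second exterior power `∧²M`. -/
abbrev Wedge2Q := (M ⊗[ℤ] M) ⧸ wedSpan M

theorem symSpan_le_comap (g : G) :
    symSpan M ≤ (symSpan M).comap (TensorProduct.map (gLin G M g) (gLin G M g)) := by
  refine Submodule.span_le.2 ?_
  rintro _ ⟨a, b, rfl⟩
  show TensorProduct.map (gLin G M g) (gLin G M g) (a ⊗ₜ[ℤ] b - b ⊗ₜ[ℤ] a) ∈ symSpan M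
  rw [map_sub, TensorProduct.map_tmul, TensorProduct.map_tmul]
  exact Submodule.subset_span ⟨g • a, g • b, rfl⟩

theorem wedSpan_le_comap (g : G) :
    wedSpan M ≤ (wedSpan M).comap (TensorProduct.map (gLin G M g) (gLin G M g)) := by
  refine Submodule.span_le.2 ?_
  rintro _ ⟨a, rfl⟩
  show TensorProduct.map (gLin G M g) (gLin G M g) (a ⊗ₜ[ℤ] a) ∈ wedSpan M
  rw [TensorProduct.map_tmul]
  exact Submodule.subset_span ⟨g • a, rfl⟩

noncomputable instance sym2SMul : SMul G (Sym2Q M) :=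
  ⟨fun g => Submodule.mapQ _ _ (TensorProduct.map (gLin G M g) (gLin G M g))
    (symSpan_le_comap G M g)⟩

noncomputable instance wedge2SMul : SMul G (Wedge2Q M) :=
  ⟨fun g => Submodule.mapQ _ _ (TensorProduct.map (gLin G M g) (gLin G M g))
    (wedSpan_le_comap G M g)⟩

theorem sym2_smul_mk (g : G) (x : M ⊗[ℤ] M) :
    g • ((symSpan M).mkQ x) = (symSpan M).mkQ (g • x) :=
  Submodule.mapQ_apply _ _ _ _

theorem wedge2_smul_mk (g : G) (x : M ⊗[ℤ] M) :
    g • ((wedSpan M).mkQ x) = (wedSpan M).mkQ (g • x) :=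
  Submodule.mapQ_apply _ _ _ _

noncomputable instance sym2Act : DistribMulAction G (Sym2Q M) where
  one_smul x := by
    obtain ⟨y, rfl⟩ := (symSpan M).mkQ_surjective x
    rw [sym2_smul_mk, one_smul]
  mul_smul g h x := by
    obtain ⟨y, rfl⟩ := (symSpan M).mkQ_surjective x
    rw [sym2_smul_mk, sym2_smul_mk, sym2_smul_mk, mul_smul]
  smul_zero g := by
    rw [← map_zero (symSpan M).mkQ, sym2_smul_mk, smul_zero]
  smul_add g x y := by
    obtain ⟨x, rfl⟩ := (symSpan M).mkQ_surjective x
    obtain ⟨y, rfl⟩ := (symSpan M).mkQ_surjective y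
    rw [← map_add (symSpan M).mkQ, sym2_smul_mk, sym2_smul_mk, sym2_smul_mk, smul_add, map_add]

noncomputable instance wedge2Act : DistribMulAction G (Wedge2Q M) where
  one_smul x := by
    obtain ⟨y, rfl⟩ := (wedSpan M).mkQ_surjective x
    rw [wedge2_smul_mk, one_smul]
  mul_smul g h x := by
    obtain ⟨y, rfl⟩ := (wedSpan M).mkQ_surjective x
    rw [wedge2_smul_mk, wedge2_smul_mk, wedge2_smul_mk, mul_smul]
  smul_zero g := by
    rw [← map_zero (wedSpan M).mkQ, wedge2_smul_mk, smul_zero]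
  smul_add g x y := by
    obtain ⟨x, rfl⟩ := (wedSpan M).mkQ_surjective x
    obtain ⟨y, rfl⟩ := (wedSpan M).mkQ_surjective y
    rw [← map_add (wedSpan M).mkQ, wedge2_smul_mk, wedge2_smul_mk, wedge2_smul_mk, smul_add, map_add]

variable {M} {N : Type} [AddCommGroup N]

/-- The map `Sym²f` induced by a linear map `f`. -/
noncomputable def sym2Map (f : M →ₗ[ℤ] N) : Sym2Q M →ₗ[ℤ] Sym2Q N :=
  Submodule.mapQ _ _ (TensorProduct.map f f) (by
    refine Submodule.span_le.2 ?_
    rintro _ ⟨a, b, rfl⟩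
    show TensorProduct.map f f (a ⊗ₜ[ℤ] b - b ⊗ₜ[ℤ] a) ∈ symSpan N
    rw [map_sub, TensorProduct.map_tmul, TensorProduct.map_tmul]
    exact Submodule.subset_span ⟨f a, f b, rfl⟩)

/-- The map `∧²f` induced by a linear map `f`. -/
noncomputable def wedge2Map (f : M →ₗ[ℤ] N) : Wedge2Q M →ₗ[ℤ] Wedge2Q N :=
  Submodule.mapQ _ _ (TensorProduct.map f f) (by
    refine Submodule.span_le.2 ?_
    rintro _ ⟨a, rfl⟩
    show TensorProduct.map f f (a ⊗ₜ[ℤ] a) ∈ wedSpan N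
    rw [TensorProduct.map_tmul]
    exact Submodule.subset_span ⟨f a, rfl⟩)

end Tensor

section PermMod
variable (G : Type) [Group G] (X : Type) [MulAction G X]

/-- The permutation action on `ℤ[X] = X → ℤ`. -/
instance permSMul : SMul G (X → ℤ) := ⟨fun g f x => f (g⁻¹ • x)⟩

theorem perm_smul_def (g : G) (f : X → ℤ) (x : X) : (g • f) x = f (g⁻¹ • x) := rfl

instance permAct : DistribMulAction G (X → ℤ) where
  one_smul f := funext fun x => by rw [perm_smul_def, inv_one, one_smul]
  mul_smul g h f := funext fun x => by
    rw [perm_smul_def, perm_smul_def, perm_smul_def, mul_inv_rev, mul_smul]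
  smul_zero g := rfl
  smul_add g f f' := rfl

variable [Fintype X]

/-- The augmentation kernel `A = ker(ℤ[X] → ℤ)`. -/
def augKer : AddSubgroup (X → ℤ) where
  carrier := {f | ∑ x, f x = 0}
  zero_mem' := by simp
  add_mem' := by
    intro a b ha hb
    have ha' : ∑ x, a x = 0 := ha
    have hb' : ∑ x, b x = 0 := hb
    show ∑ x, (a x + b x) = 0
    rw [Finset.sum_add_distrib, ha', hb', add_zero]
  neg_mem' := by
    intro a ha
    have ha' : ∑ x, a x = 0 := ha
    show ∑ x, (-(a x)) = 0
    rw [Finset.sum_neg_distrib, ha', neg_zero]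

theorem smul_mem_augKer (g : G) (f : X → ℤ) (hf : f ∈ augKer X) :
    g • f ∈ augKer X := by
  have hf' : ∑ x, f x = 0 := hf
  show ∑ x, f (g⁻¹ • x) = 0
  exact (Equiv.sum_comp (MulAction.toPerm (g⁻¹ : G)) f).trans hf'

instance augKerSMul : SMul G (augKer X) :=
  ⟨fun g f => ⟨g • (f : X → ℤ), smul_mem_augKer G X g f f.2⟩⟩

theorem augKer_smul_def (g : G) (f : augKer X) :
    ((g • f : augKer X) : X → ℤ) = g • (f : X → ℤ) := rfl

instance augKerAct : DistribMulAction G (augKer X) where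
  one_smul f := Subtype.ext (by rw [augKer_smul_def, one_smul])
  mul_smul g h f := Subtype.ext (by
    rw [augKer_smul_def, augKer_smul_def, augKer_smul_def, mul_smul])
  smul_zero g := Subtype.ext (by
    rw [augKer_smul_def]
    show g • (0 : X → ℤ) = 0
    rw [smul_zero])
  smul_add g f f' := Subtype.ext (by
    show g • ((f : X → ℤ) + f') = g • (f : X → ℤ) + g • (f' : X → ℤ)
    rw [smul_add])

end PermMod

section P2sec
variable (G : Type) [Group G]

/-- The set of 2-element subsets of `X`. -/
def P2 (X : Type) [DecidableEq X] : Type := {s : Finset X // s.card = 2}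

noncomputable instance (X : Type) [DecidableEq X] [Fintype X] : Fintype (P2 X) := by
  unfold P2; infer_instance

instance p2SMul (X : Type) [DecidableEq X] [MulAction G X] : SMul G (P2 X) :=
  ⟨fun g s => ⟨s.1.image (fun x => g • x), by
    rw [Finset.card_image_of_injective _ (MulAction.injective g)]; exact s.2⟩⟩

theorem p2_smul_def (X : Type) [DecidableEq X] [MulAction G X] (g : G) (s : P2 X) :
    (g • s).1 = s.1.image (fun x => g • x) := rfl

instance p2Act (X : Type) [DecidableEq X] [MulAction G X] : MulAction G (P2 X) where
  one_smul s := Subtype.ext (by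
    rw [p2_smul_def]
    simp)
  mul_smul g h s := Subtype.ext (by
    simp only [p2_smul_def, Finset.image_image]
    refine Finset.image_congr ?_
    intro x _
    exact mul_smul g h x)

end P2sec

/-- The root lattice `A_{n-1}` as an `S_n`-lattice. -/
abbrev rootLat (n : ℕ) := augKer (Fin n)


/-!
The connecting map of `0 → M → P → F → 0` sends the class of a 1-cocycle `f` of `F` to the class
of `δu`, where `u : G → P` lifts `f`; `δu` takes values in `M`. It is injective since
`H¹(G, P) = 0`. Its image lies in `Ш²(G, M)` because `H¹(C, F) ≅ Ĥ⁻¹(C, F) = 0` for cyclic `C`,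
and is all of `Ш²(G, M)` since `Ш²(G, P) = 0`. Both vanishings for a permutation lattice `ℤ[X]`
rest on one fact: a 1-cocycle with values in `A[X]` that vanishes on stabilizers is a coboundary.
For `H¹` take `A = ℤ`; for `Ш²` take `A = ℤ/|G|` and the cochain `∑ₖ c(·, k)`, whose coboundary
is `|G| c`.

For the second statement, `Ш² = 0` passes from permutation lattices to a quasi-permutation `S`
(a sub-lattice with permutation quotient), to its summand `D`, to the middle term of
`0 → D → E → Q` and back down to the sub-lattice `M` of `E`.
-/

open Subgroup

section Cocycles
variable {K : Type} [Group K] {A B : Type} [AddCommGroup A] [AddCommGroup B]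
  [DistribMulAction K A] [DistribMulAction K B]

theorem IsEquivMapP.restrict {φ : A → B} (hφ : IsEquivMapP K φ) (H : Subgroup K) :
    IsEquivMapP H φ :=
  fun h m => hφ h m

theorem IsEquivMapP.addEquiv_symm {e : A ≃+ B} (he : IsEquivMapP K e) : IsEquivMapP K e.symm :=
  fun g b => e.injective (by rw [he, e.apply_symm_apply, e.apply_symm_apply])

theorem mem_B1_iff {f : Z1 K A} : f ∈ B1 K A ↔ ∃ m : A, ∀ g, f.1 g = g • m - m :=
  ⟨fun ⟨m, hm⟩ => ⟨m, fun g => by rw [← hm]; rfl⟩,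
    fun ⟨m, hm⟩ => ⟨m, Subtype.ext (funext fun g => (hm g).symm)⟩⟩

theorem mem_B2_iff {c : Z2 K A} :
    c ∈ B2 K A ↔ ∃ u : K → A, ∀ g h, c.1 g h = g • u h - u (g * h) + u g :=
  ⟨fun ⟨u, hu⟩ => ⟨u, fun g h => by rw [← hu]; rfl⟩,
    fun ⟨u, hu⟩ => ⟨u, Subtype.ext (funext₂ fun g h => (hu g h).symm)⟩⟩

theorem mem_Z1_of_cobound2_eq_zero {u : K → A} (hu : ∀ g h, g • u h - u (g * h) + u g = 0) :
    u ∈ Z1 K A :=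
  fun g h => by rw [← sub_eq_zero, ← neg_eq_zero, ← hu g h]; abel

theorem Z1.apply_one (f : Z1 K A) : f.1 1 = 0 := by
  have h := f.2 1 1
  rwa [one_mul, one_smul, left_eq_add] at h

def IsLocallyCoboundary (c : Z2 K A) : Prop :=
  ∀ g : K, resZ2 K A (zpowers g) c ∈ B2 (zpowers g) A

theorem mem_Sha2_mk_iff {c : Z2 K A} :
    (QuotientAddGroup.mk c : H2 K A) ∈ Sha2 K A ↔ IsLocallyCoboundary c := by
  simp only [Sha2, AddSubgroup.mem_iInf, AddMonoidHom.mem_ker, resH2, QuotientAddGroup.map_mk,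
    QuotientAddGroup.eq_zero_iff, IsLocallyCoboundary]

variable (K A) in
def H1Trivial : Prop := ∀ f : Z1 K A, f ∈ B1 K A

variable (K A) in
def Sha2Trivial : Prop := ∀ c : Z2 K A, IsLocallyCoboundary c → c ∈ B2 K A

theorem Sha2Trivial.eq_zero (h : Sha2Trivial K A) (x : Sha2 K A) : x = 0 := by
  obtain ⟨y, hy⟩ := x
  obtain ⟨c, rfl⟩ := QuotientAddGroup.mk_surjective y
  exact Subtype.ext ((QuotientAddGroup.eq_zero_iff c).2 (h c (mem_Sha2_mk_iff.1 hy)))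

def mapZ1 (φ : A →+ B) (hφ : IsEquivMapP K φ) (f : Z1 K A) : Z1 K B :=
  ⟨fun g => φ (f.1 g), fun g h => by
    show φ (f.1 (g * h)) = g • φ (f.1 h) + φ (f.1 g)
    rw [f.2 g h, map_add, hφ]⟩

def mapZ2 (φ : A →+ B) (hφ : IsEquivMapP K φ) (c : Z2 K A) : Z2 K B :=
  ⟨fun g h => φ (c.1 g h), fun g h k => by
    show g • φ (c.1 h k) - φ (c.1 (g * h) k) + φ (c.1 g (h * k)) - φ (c.1 g h) = 0
    rw [← hφ, ← map_sub, ← map_add, ← map_sub, c.2 g h k, map_zero]⟩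

theorem mapZ1_mem_B1 (φ : A →+ B) (hφ : IsEquivMapP K φ) {f : Z1 K A} (hf : f ∈ B1 K A) :
    mapZ1 φ hφ f ∈ B1 K B := by
  obtain ⟨m, hm⟩ := mem_B1_iff.1 hf
  exact mem_B1_iff.2 ⟨φ m, fun g => by
    show φ (f.1 g) = _
    rw [hm, map_sub, hφ]⟩

theorem mapZ2_mem_B2 (φ : A →+ B) (hφ : IsEquivMapP K φ) {c : Z2 K A} (hc : c ∈ B2 K A) :
    mapZ2 φ hφ c ∈ B2 K B := by
  obtain ⟨u, hu⟩ := mem_B2_iff.1 hc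
  exact mem_B2_iff.2 ⟨fun g => φ (u g), fun g h => by
    show φ (c.1 g h) = _
    rw [hu, map_add, map_sub, hφ]⟩

theorem IsLocallyCoboundary.map (φ : A →+ B) (hφ : IsEquivMapP K φ) {c : Z2 K A}
    (hc : IsLocallyCoboundary c) : IsLocallyCoboundary (mapZ2 φ hφ c) :=
  fun g => mapZ2_mem_B2 φ (hφ.restrict _) (hc g)

theorem H1Trivial.of_retract (i : A →+ B) (r : B →+ A) (hi : IsEquivMapP K i)
    (hr : IsEquivMapP K r) (hri : ∀ a, r (i a) = a) (hB : H1Trivial K B) : H1Trivial K A := by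
  intro f
  have hf : mapZ1 r hr (mapZ1 i hi f) = f := Subtype.ext (funext fun g => hri (f.1 g))
  exact hf ▸ mapZ1_mem_B1 r hr (hB _)

theorem Sha2Trivial.of_retract (i : A →+ B) (r : B →+ A) (hi : IsEquivMapP K i)
    (hr : IsEquivMapP K r) (hri : ∀ a, r (i a) = a) (hB : Sha2Trivial K B) :
    Sha2Trivial K A := by
  intro c hc
  have hc' : mapZ2 r hr (mapZ2 i hi c) = c := Subtype.ext (funext₂ fun g h => hri (c.1 g h))
  exact hc' ▸ mapZ2_mem_B2 r hr (hB _ (hc.map i hi))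

theorem Sha2Trivial.of_prod_addEquiv {D D' : Type} [AddCommGroup D] [AddCommGroup D']
    [DistribMulAction K D] [DistribMulAction K D'] (e : D × D' ≃+ A) (he : IsEquivMapP K e)
    (hA : Sha2Trivial K A) : Sha2Trivial K D :=
  hA.of_retract (e.toAddMonoidHom.comp (AddMonoidHom.inl D D'))
    ((AddMonoidHom.fst D D').comp e.symm.toAddMonoidHom)
    (fun g x => by
      rw [AddMonoidHom.comp_apply, AddMonoidHom.inl_apply, ← smul_zero g, ← Prod.smul_mk]
      exact he g (x, 0))
    (fun g a => by simp [he.addEquiv_symm g a])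
    fun x => by simp

end Cocycles

structure EquivSES (K A B C : Type) [Group K] [AddCommGroup A] [AddCommGroup B] [AddCommGroup C]
    [DistribMulAction K A] [DistribMulAction K B] [DistribMulAction K C] where
  i : A →+ B
  p : B →+ C
  map_smul_i : IsEquivMapP K i
  map_smul_p : IsEquivMapP K p
  injective_i : Injective i
  surjective_p : Surjective p
  range_eq_ker : i.range = p.ker

theorem ShortExactG.nonempty_equivSES {K A B C : Type} [Group K] [AddCommGroup A]
    [AddCommGroup B] [AddCommGroup C] [DistribMulAction K A] [DistribMulAction K B]
    [DistribMulAction K C] (h : ShortExactG K A B C) : Nonempty (EquivSES K A B C) :=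
  let ⟨i, p, hi, hp, hinj, hsurj, hker⟩ := h
  ⟨⟨i, p, hi, hp, hinj, hsurj, hker⟩⟩

namespace EquivSES
variable {K : Type} [Group K] {A B C : Type} [AddCommGroup A] [AddCommGroup B] [AddCommGroup C]
  [DistribMulAction K A] [DistribMulAction K B] [DistribMulAction K C]

section
variable (E : EquivSES K A B C)

def restrict (H : Subgroup K) : EquivSES H A B C :=
  ⟨E.i, E.p, E.map_smul_i.restrict H, E.map_smul_p.restrict H, E.injective_i, E.surjective_p,
    E.range_eq_ker⟩

theorem p_i (a : A) : E.p (E.i a) = 0 :=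
  (E.range_eq_ker ▸ ⟨a, rfl⟩ : E.i a ∈ E.p.ker)

theorem exists_i_eq {b : B} (hb : E.p b = 0) : ∃ a, E.i a = b :=
  (E.range_eq_ker ▸ hb : b ∈ E.i.range)

theorem mem_Z2_of_i_eq {c : K → K → A} (z : Z2 K B) (hc : ∀ g h, E.i (c g h) = z.1 g h) :
    c ∈ Z2 K A := fun g h k => E.injective_i <| by
  rw [map_zero, map_sub, map_add, map_sub, E.map_smul_i, hc, hc, hc, hc]
  exact z.2 g h k

theorem mem_B2_of_i_eq_cobound {c : Z2 K A} {u : K → B} (hu : ∀ g, E.p (u g) = 0)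
    (hc : ∀ g h, E.i (c.1 g h) = g • u h - u (g * h) + u g) : c ∈ B2 K A := by
  choose v hv using fun g => E.exists_i_eq (hu g)
  refine mem_B2_iff.2 ⟨v, fun g h => E.injective_i ?_⟩
  rw [hc, map_add, map_sub, E.map_smul_i, hv, hv, hv]

/-- `c` represents the image of the class of `f` under the connecting map `H¹(C) → H²(A)`. -/
def Connects (f : Z1 K C) (c : Z2 K A) : Prop :=
  ∃ u : K → B, (∀ g, E.p (u g) = f.1 g) ∧ ∀ g h, E.i (c.1 g h) = g • u h - u (g * h) + u g

theorem exists_connects_of_i_eq_cobound (c : Z2 K A) {u : K → B}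
    (hc : ∀ g h, E.i (c.1 g h) = g • u h - u (g * h) + u g) : ∃ f, E.Connects f c := by
  refine ⟨⟨fun g => E.p (u g), mem_Z1_of_cobound2_eq_zero fun g h => ?_⟩, u, fun _ => rfl, hc⟩
  rw [← E.map_smul_p, ← map_sub, ← map_add, ← hc, E.p_i]

theorem exists_connects (f : Z1 K C) : ∃ c, E.Connects f c := by
  choose s hs using E.surjective_p
  have hp : ∀ g h, E.p (g • s (f.1 h) - s (f.1 (g * h)) + s (f.1 g)) = 0 := fun g h => by
    rw [map_add, map_sub, E.map_smul_p, hs, hs, hs, f.2 g h]; abel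
  choose c hc using fun g h => E.exists_i_eq (hp g h)
  exact ⟨⟨c, E.mem_Z2_of_i_eq (cobound2Hom K B fun g => s (f.1 g)) hc⟩, _, fun g => hs _, hc⟩

theorem Connects.add {f f' : Z1 K C} {c c' : Z2 K A} (h : E.Connects f c)
    (h' : E.Connects f' c') : E.Connects (f + f') (c + c') := by
  obtain ⟨u, hpu, hu⟩ := h
  obtain ⟨u', hpu', hu'⟩ := h'
  refine ⟨u + u', fun g => by simp [hpu, hpu'], fun g h => ?_⟩
  simp only [Pi.add_apply, AddSubgroup.coe_add, map_add, hu, hu', smul_add]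
  abel

theorem Connects.sub_mem_B2 {f : Z1 K C} {c c' : Z2 K A} (h : E.Connects f c)
    (h' : E.Connects f c') : c - c' ∈ B2 K A := by
  obtain ⟨u, hpu, hu⟩ := h
  obtain ⟨u', hpu', hu'⟩ := h'
  refine E.mem_B2_of_i_eq_cobound (u := u - u') (fun g => by simp [hpu, hpu']) fun g h => ?_
  simp only [Pi.sub_apply, AddSubgroup.coe_sub, map_sub, hu, hu', smul_sub]
  abel

theorem Connects.mem_B2 {f : Z1 K C} {c : Z2 K A} (h : E.Connects f c) (hf : f ∈ B1 K C) :
    c ∈ B2 K A := by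
  obtain ⟨u, hpu, hu⟩ := h
  obtain ⟨y, hy⟩ := mem_B1_iff.1 hf
  obtain ⟨b, rfl⟩ := E.surjective_p y
  refine E.mem_B2_of_i_eq_cobound (u := fun g => u g - (g • b - b))
    (fun g => by rw [map_sub, hpu, hy, map_sub, E.map_smul_p, sub_self]) fun g h => ?_
  simp only [hu, smul_sub, mul_smul]
  abel

theorem Connects.restrict {f : Z1 K C} {c : Z2 K A} (h : E.Connects f c) (H : Subgroup K) :
    (E.restrict H).Connects (resZ1 K C H f) (resZ2 K A H c) :=
  let ⟨u, hpu, hu⟩ := h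
  ⟨fun g => u g, fun g => hpu g, fun g h => hu g h⟩

noncomputable def connectingZ1 : Z1 K C →+ H2 K A :=
  AddMonoidHom.mk' (fun f => QuotientAddGroup.mk (E.exists_connects f).choose) fun f f' => by
    rw [← QuotientAddGroup.mk_add]
    exact QuotientAddGroup.eq_iff_sub_mem.2 <|
      Connects.sub_mem_B2 E (E.exists_connects _).choose_spec
        ((E.exists_connects f).choose_spec.add E (E.exists_connects f').choose_spec)

noncomputable def connecting : H1 K C →+ H2 K A :=
  QuotientAddGroup.lift _ E.connectingZ1 fun f hf =>
    (QuotientAddGroup.eq_zero_iff _).2 ((E.exists_connects f).choose_spec.mem_B2 E hf)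

theorem connecting_mk {f : Z1 K C} {c : Z2 K A} (h : E.Connects f c) :
    E.connecting (QuotientAddGroup.mk f) = QuotientAddGroup.mk c :=
  QuotientAddGroup.eq_iff_sub_mem.2 ((E.exists_connects f).choose_spec.sub_mem_B2 E h)

theorem connecting_mem_Sha2 (hC : ∀ g : K, H1Trivial (zpowers g) C) (x : H1 K C) :
    E.connecting x ∈ Sha2 K A := by
  obtain ⟨f, rfl⟩ := QuotientAddGroup.mk_surjective x
  obtain ⟨c, hc⟩ := E.exists_connects f
  rw [E.connecting_mk hc, mem_Sha2_mk_iff]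
  exact fun g => (hc.restrict E _).mem_B2 _ (hC g _)

theorem connecting_injective (hB : H1Trivial K B) : Injective E.connecting := by
  refine (injective_iff_map_eq_zero _).2 fun x hx => ?_
  obtain ⟨f, rfl⟩ := QuotientAddGroup.mk_surjective x
  obtain ⟨c, u, hpu, hu⟩ := E.exists_connects f
  rw [E.connecting_mk ⟨u, hpu, hu⟩, QuotientAddGroup.eq_zero_iff] at hx
  obtain ⟨v, hv⟩ := mem_B2_iff.1 hx
  have hz : (fun g => u g - E.i (v g)) ∈ Z1 K B := mem_Z1_of_cobound2_eq_zero fun g h => by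
    have := hu g h
    rw [hv, map_add, map_sub, E.map_smul_i] at this
    calc g • (u h - E.i (v h)) - (u (g * h) - E.i (v (g * h))) + (u g - E.i (v g))
        = (g • u h - u (g * h) + u g) - (g • E.i (v h) - E.i (v (g * h)) + E.i (v g)) := by
          rw [smul_sub]; abel
      _ = 0 := by rw [this, sub_self]
  obtain ⟨b, hb⟩ := mem_B1_iff.1 (hB ⟨_, hz⟩)
  refine (QuotientAddGroup.eq_zero_iff _).2 (mem_B1_iff.2 ⟨E.p b, fun g => ?_⟩)
  rw [← hpu, ← E.map_smul_p, ← map_sub, ← (hb g : u g - E.i (v g) = _), map_sub, E.p_i, sub_zero]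

theorem connecting_surjective_Sha2 (hB : Sha2Trivial K B) {y : H2 K A} (hy : y ∈ Sha2 K A) :
    ∃ x, E.connecting x = y := by
  obtain ⟨c, rfl⟩ := QuotientAddGroup.mk_surjective y
  obtain ⟨u, hu⟩ := mem_B2_iff.1 (hB _ ((mem_Sha2_mk_iff.1 hy).map E.i E.map_smul_i))
  obtain ⟨f, hf⟩ := E.exists_connects_of_i_eq_cobound c hu
  exact ⟨_, E.connecting_mk hf⟩

noncomputable def h1EquivSha2 (hB1 : H1Trivial K B) (hB2 : Sha2Trivial K B)
    (hC : ∀ g : K, H1Trivial (zpowers g) C) : H1 K C ≃+ Sha2 K A :=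
  AddEquiv.ofBijective (E.connecting.codRestrict _ (E.connecting_mem_Sha2 hC))
    ⟨fun _ _ hxy => E.connecting_injective hB1 (congrArg Subtype.val hxy),
      fun ⟨_, hy⟩ => (E.connecting_surjective_Sha2 hB2 hy).imp fun _ hx => Subtype.ext hx⟩

end

theorem sha2Trivial_left (E : EquivSES K A B C) (hB : Sha2Trivial K B) (hC : H1Trivial K C) :
    Sha2Trivial K A := by
  intro c hc
  obtain ⟨u, hu⟩ := mem_B2_iff.1 (hB _ (hc.map E.i E.map_smul_i))
  obtain ⟨f, hf⟩ := E.exists_connects_of_i_eq_cobound c hu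
  exact hf.mem_B2 E (hC f)

theorem sha2Trivial_middle (E : EquivSES K A B C) (hA : Sha2Trivial K A) (hC : Sha2Trivial K C)
    (hCc : ∀ g : K, H1Trivial (zpowers g) C) : Sha2Trivial K B := by
  intro c hc
  obtain ⟨q, hq⟩ := mem_B2_iff.1 (hC _ (hc.map E.p E.map_smul_p))
  choose w hw using fun g => E.surjective_p (q g)
  -- `c - δw` takes values in `A`, and is locally a coboundary there because `H¹` of `C`
  -- vanishes on cyclic subgroups.
  have hp : ∀ g h, E.p ((c - cobound2Hom K B w).1 g h) = 0 := fun g h => by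
    show E.p (c.1 g h - (g • w h - w (g * h) + w g)) = 0
    rw [map_sub, map_add, map_sub, E.map_smul_p, hw, hw, hw, ← hq]
    exact sub_self _
  choose v hv using fun g h => E.exists_i_eq (hp g h)
  set vZ : Z2 K A := ⟨v, E.mem_Z2_of_i_eq _ hv⟩
  have hvZ : IsLocallyCoboundary vZ := fun g => by
    obtain ⟨t, ht⟩ := mem_B2_iff.1 (hc g)
    obtain ⟨f, hf⟩ := (E.restrict (zpowers g)).exists_connects_of_i_eq_cobound
      (resZ2 K A _ vZ) (u := fun a => t a - w a) fun a b => by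
        show E.i (v a b) = _
        rw [hv]
        show c.1 a b - ((a : K) • w b - w (a * b) + w a) = _
        rw [show c.1 a b = _ from ht a b, smul_sub]
        simp only [Subgroup.smul_def, Subgroup.coe_mul]
        abel
    exact hf.mem_B2 _ (hCc g f)
  obtain ⟨m, hm⟩ := mem_B2_iff.1 (hA vZ hvZ)
  refine mem_B2_iff.2 ⟨fun g => E.i (m g) + w g, fun g h => ?_⟩
  have hvm :
      c.1 g h - (g • w h - w (g * h) + w g) = g • E.i (m h) - E.i (m (g * h)) + E.i (m g) := by
    rw [← E.map_smul_i, ← map_sub, ← map_add, ← show v g h = _ from hm g h, hv]; rfl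
  calc c.1 g h = (c.1 g h - (g • w h - w (g * h) + w g)) + (g • w h - w (g * h) + w g) := by
        abel
    _ = _ := by dsimp only; rw [hvm, smul_add]; abel

end EquivSES

section Permutation
variable {K X : Type} [Group K] [MulAction K X]

/-- `m x = -f (γ x) x`, where `γ x` carries a fixed representative of the orbit of `x` to `x`. -/
theorem exists_eq_sub_of_vanish_on_stabilizers {A : Type} [AddCommGroup A] {f : K → X → A}
    (hf : ∀ g h x, f (g * h) x = f h (g⁻¹ • x) + f g x)
    (hstab : ∀ s x, s • x = x → f s x = 0) :
    ∃ m : X → A, ∀ g x, f g x = m (g⁻¹ • x) - m x := by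
  let r : X → X := fun x => (Quotient.mk (MulAction.orbitRel K X) x).out
  have hr : ∀ (g : K) x, r (g • x) = r x := fun g x =>
    congrArg Quotient.out (Quotient.sound ⟨g, rfl⟩)
  have hγ : ∀ x, ∃ γ : K, γ • r x = x := fun x =>
    let ⟨g, hg⟩ := Quotient.exact (Quotient.out_eq (Quotient.mk (MulAction.orbitRel K X) x))
    ⟨g⁻¹, by rw [inv_smul_eq_iff]; exact hg.symm⟩
  choose γ hγ using hγ
  refine ⟨fun x => -f (γ x) x, fun g x => ?_⟩
  set y := g⁻¹ • x
  set s := (γ x)⁻¹ * (g * γ y)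
  have hs : s • r x = r x := by
    rw [mul_smul, mul_smul, ← hr g⁻¹ x, hγ, smul_inv_smul, inv_smul_eq_iff, hr, hγ]
  have h1 := hf (γ x) s x
  rw [mul_inv_cancel_left, show (γ x)⁻¹ • x = r x by rw [inv_smul_eq_iff, hγ], hstab s _ hs,
    zero_add, hf] at h1
  show f g x = -f (γ y) y - -f (γ x) x
  rw [← h1]
  abel

theorem Z1.perm_apply_mul (f : Z1 K (X → ℤ)) (g h : K) (x : X) :
    f.1 (g * h) x = f.1 h (g⁻¹ • x) + f.1 g x :=
  congrFun (f.2 g h) x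

theorem Z1.perm_apply_eq_zero [Finite K] (f : Z1 K (X → ℤ)) {s : K} {x : X} (hs : s • x = x) :
    f.1 s x = 0 := by
  have hpow : ∀ k : ℕ, f.1 (s ^ k) x = k * f.1 s x := fun k => by
    induction k with
    | zero => simp [Z1.apply_one]
    | succ k ih =>
      rw [pow_succ', Z1.perm_apply_mul, inv_smul_eq_iff.2 hs.symm, ih]
      push_cast; ring
  have h := hpow (orderOf s)
  rw [pow_orderOf_eq_one, Z1.apply_one] at h
  exact (mul_eq_zero.1 h.symm).resolve_left (by exact_mod_cast (orderOf_pos s).ne')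

theorem h1Trivial_perm [Finite K] : H1Trivial K (X → ℤ) := fun f =>
  let ⟨m, hm⟩ := exists_eq_sub_of_vanish_on_stabilizers (Z1.perm_apply_mul f)
    fun _ _ hs => Z1.perm_apply_eq_zero f hs
  mem_B1_iff.2 ⟨m, fun g => funext (hm g)⟩

theorem Z2.smul_sum_sub_sum_add_sum [Fintype K] {A : Type} [AddCommGroup A]
    [DistribMulAction K A] (c : Z2 K A) (g h : K) :
    g • ∑ k, c.1 h k - ∑ k, c.1 (g * h) k + ∑ k, c.1 g k = Fintype.card K • c.1 g h := by
  have hsum := Finset.sum_eq_zero (s := Finset.univ) fun k _ => c.2 g h k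
  rw [Finset.sum_sub_distrib, Finset.sum_add_distrib, Finset.sum_sub_distrib, ← Finset.smul_sum,
    Finset.sum_const, Finset.card_univ,
    Fintype.sum_equiv (Equiv.mulLeft h) (fun k => c.1 g (h * k)) (c.1 g) fun _ => rfl] at hsum
  exact sub_eq_zero.1 hsum

theorem Z2.card_dvd_perm_sum_apply [Fintype K] (c : Z2 K (X → ℤ)) (hc : IsLocallyCoboundary c)
    {s : K} {x : X} (hs : s • x = x) : (Fintype.card K : ℤ) ∣ (∑ k, c.1 s k) x := by
  obtain ⟨w, hw⟩ := mem_B2_iff.1 (hc s)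
  -- `∑ₖ c(·, k) - |K| w` is a 1-cocycle on `⟨s⟩`, hence vanishes at `s` on the fixed point `x`.
  let F : zpowers s → X → ℤ := fun a => ∑ k, c.1 a k - Fintype.card K • w a
  have hF : F ∈ Z1 (zpowers s) (X → ℤ) := mem_Z1_of_cobound2_eq_zero fun a b => by
    have h := Z2.smul_sum_sub_sum_add_sum c a b
    rw [show c.1 a b = _ from hw a b] at h
    rw [← sub_eq_zero] at h
    simp only [F, smul_sub]
    rw [smul_comm a (Fintype.card K), Subgroup.smul_def a, Subgroup.coe_mul, ← h, smul_add,
      smul_sub]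
    abel
  have h0 := Z1.perm_apply_eq_zero ⟨F, hF⟩ (s := ⟨s, mem_zpowers s⟩) hs
  exact ⟨w ⟨s, mem_zpowers s⟩ x, by simpa [F, sub_eq_zero] using h0⟩

theorem sha2Trivial_perm [Finite K] : Sha2Trivial K (X → ℤ) := by
  intro c hc
  have := Fintype.ofFinite K
  set n := Fintype.card K
  set U : K → X → ℤ := fun g => ∑ k, c.1 g k
  have hU : ∀ g h x, U h (g⁻¹ • x) - U (g * h) x + U g x = n * c.1 g h x := fun g h x => by
    simpa [U, nsmul_eq_mul, perm_smul_def, Finset.sum_apply] using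
      congrFun (Z2.smul_sum_sub_sum_add_sum c g h) x
  -- modulo `|K|`, `U` is a 1-cocycle vanishing on stabilizers
  obtain ⟨m, hm⟩ := exists_eq_sub_of_vanish_on_stabilizers (f := fun g x => (U g x : ZMod n))
    (fun g h x => by
      rw [← sub_eq_zero, ← Int.cast_add, ← Int.cast_sub, ZMod.intCast_zmod_eq_zero_iff_dvd]
      exact ⟨-c.1 g h x, by linear_combination -(hU g h x)⟩)
    fun s x hs => (ZMod.intCast_zmod_eq_zero_iff_dvd _ _).2 (Z2.card_dvd_perm_sum_apply c hc hs)
  choose m' hm' using fun x => ZMod.intCast_surjective (m x)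
  have hdvd : ∀ g x, (n : ℤ) ∣ U g x - (m' (g⁻¹ • x) - m' x) := fun g x => by
    rw [← ZMod.intCast_zmod_eq_zero_iff_dvd]
    push_cast
    rw [hm', hm', ← hm g x, sub_self]
  choose W hW using hdvd
  refine mem_B2_iff.2 ⟨W, fun g h => funext fun x => mul_left_cancel₀ (b := c.1 g h x)
    (Int.natCast_ne_zero.2 (Fintype.card_ne_zero (α := K))) ?_⟩
  show _ = (n : ℤ) * (W h (g⁻¹ • x) - W (g * h) x + W g x)
  rw [mul_add, mul_sub, ← hW, ← hW, ← hW, ← hU, mul_inv_rev, mul_smul]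
  ring

end Permutation

section PermLat
variable {K P : Type} [Group K] [AddCommGroup P] [DistribMulAction K P]

theorem IsPermLat.restrict (h : IsPermLat K P) (H : Subgroup K) : IsPermLat H P :=
  let ⟨ι, hι, b, σ, hσ⟩ := h
  ⟨ι, hι, b, fun a => σ a, fun a i => hσ a i⟩

theorem IsPermLat.exists_addEquiv (h : IsPermLat K P) :
    ∃ (ι : Type) (_ : MulAction K ι) (e : (ι → ℤ) ≃+ P),
      IsEquivMapP K e ∧ IsEquivMapP K e.symm := by
  classical
  obtain ⟨ι, _, b, σ, hσ⟩ := h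
  let _ : MulAction K ι :=
    { smul := σ
      one_smul := fun i => b.injective (by
        show b (σ 1 i) = b i
        rw [← hσ, one_smul])
      mul_smul := fun g h i => b.injective (by
        show b (σ (g * h) i) = b (σ g (σ h i))
        rw [← hσ, ← hσ, ← hσ, mul_smul]) }
  let e : (ι → ℤ) ≃+ P := b.equivFun.symm.toAddEquiv
  have he' : IsEquivMapP K e.symm := fun g x => by
    have hlin :
        b.equivFun.toLinearMap ∘ₗ gLin K P g = gLin K (ι → ℤ) g ∘ₗ b.equivFun.toLinearMap :=
      b.ext fun i => funext fun j => by
        show b.equivFun (g • b i) j = b.equivFun (b i) (g⁻¹ • j)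
        rw [show g • b i = b (g • i) from hσ g i, b.equivFun_self, b.equivFun_self,
          eq_inv_smul_iff]
    exact LinearMap.congr_fun hlin x
  exact ⟨ι, inferInstance, e, he'.addEquiv_symm, he'⟩

theorem IsPermLat.h1Trivial [Finite K] (h : IsPermLat K P) : H1Trivial K P :=
  let ⟨_, _, e, he, he'⟩ := h.exists_addEquiv
  H1Trivial.of_retract e.symm.toAddMonoidHom e.toAddMonoidHom he' he e.apply_symm_apply
    h1Trivial_perm

theorem IsPermLat.sha2Trivial [Finite K] (h : IsPermLat K P) : Sha2Trivial K P :=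
  let ⟨_, _, e, he, he'⟩ := h.exists_addEquiv
  Sha2Trivial.of_retract e.symm.toAddMonoidHom e.toAddMonoidHom he' he e.apply_symm_apply
    sha2Trivial_perm

end PermLat

section Flasque
variable {K A : Type} [Group K] [AddCommGroup A] [DistribMulAction K A]

theorem Z1.apply_mem_normKer [Finite K] (f : Z1 K A) (g : K) : f.1 g ∈ normKer K A := by
  have := Fintype.ofFinite K
  show ∑ᶠ h : K, h • f.1 g = 0
  -- `h • f(g) = f(hg) - f(h)`, and the sum telescopes
  simp only [finsum_eq_sum_of_fintype, fun h => eq_sub_of_add_eq (f.2 h g).symm,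
    Finset.sum_sub_distrib, Fintype.sum_equiv (Equiv.mulRight g) (fun h => f.1 (h * g)) f.1
      fun _ => rfl, sub_self]

theorem mem_augSub_of_tateNeg1 [Finite K] (hK : ∀ x y : TateNeg1 K A, x = y) {a : A}
    (ha : a ∈ normKer K A) : a ∈ augSub K A :=
  AddSubgroup.mem_addSubgroupOf.1 <|
    (QuotientAddGroup.eq_zero_iff (⟨a, ha⟩ : normKer K A)).1 (hK _ 0)

theorem augSub_le_range_of_forall_mem_powers {σ : K} (hσ : ∀ h : K, h ∈ Submonoid.powers σ) :
    augSub K A ≤ (DistribSMul.toAddMonoidHom A σ - AddMonoidHom.id A).range := by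
  rw [augSub, AddSubgroup.closure_le]
  rintro _ ⟨h, m, rfl⟩
  obtain ⟨k, rfl⟩ := (Submonoid.mem_powers_iff _ _).1 (hσ h)
  induction k generalizing m with
  | zero => exact ⟨0, by simp⟩
  | succ k ih =>
    obtain ⟨y, hy⟩ := ih (σ • m)
    refine ⟨y + m, ?_⟩
    simp only [AddMonoidHom.sub_apply, DistribSMul.toAddMonoidHom_apply,
      AddMonoidHom.id_apply] at hy ⊢
    rw [pow_succ, mul_smul, ← sub_add_sub_cancel _ (σ • m) m, ← hy, smul_add]
    abel

theorem Z1.ext_of_forall_mem_powers {σ : K} (hσ : ∀ h : K, h ∈ Submonoid.powers σ)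
    {f f' : Z1 K A} (h : f.1 σ = f'.1 σ) : f = f' := by
  refine Subtype.ext (funext fun g => ?_)
  obtain ⟨k, rfl⟩ := (Submonoid.mem_powers_iff _ _).1 (hσ g)
  induction k with
  | zero => rw [pow_zero, Z1.apply_one, Z1.apply_one]
  | succ k ih => rw [pow_succ', f.2, f'.2, ih, h]

theorem h1Trivial_of_tateNeg1 [Finite K] [IsCyclic K] (hK : ∀ x y : TateNeg1 K A, x = y) :
    H1Trivial K A := by
  obtain ⟨σ, hσ⟩ := IsCyclic.exists_generator (α := K)
  have hσ' : ∀ h : K, h ∈ Submonoid.powers σ := fun h => mem_powers_iff_mem_zpowers.2 (hσ h)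
  intro f
  obtain ⟨m, hm⟩ := augSub_le_range_of_forall_mem_powers hσ'
    (mem_augSub_of_tateNeg1 hK (Z1.apply_mem_normKer f σ))
  rw [Z1.ext_of_forall_mem_powers hσ' (f' := coboundHom K A m) hm.symm]
  exact ⟨m, rfl⟩

theorem IsFlasque.h1Trivial_zpowers [Finite K] (h : IsFlasque K A) (g : K) :
    H1Trivial (zpowers g) A :=
  h1Trivial_of_tateNeg1 (h (zpowers g))

end Flasque

theorem stmt_15_general (G : Type) [Group G] [Finite G]
    (M P F : Type) [AddCommGroup M] [AddCommGroup P] [AddCommGroup F]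
    [DistribMulAction G M] [DistribMulAction G P] [DistribMulAction G F]
    (hPperm : IsPermLat G P)
    (hFfl : IsFlasque G F) (se : ShortExactG G M P F) :
    Nonempty (H1 G F ≃+ Sha2 G M) ∧
    (IsEquivSummandQP G M → ∀ (H : Subgroup G) (x : Sha2 H M), x = 0) := by
  obtain ⟨E⟩ := se.nonempty_equivSES
  refine ⟨⟨E.h1EquivSha2 hPperm.h1Trivial hPperm.sha2Trivial hFfl.h1Trivial_zpowers⟩, ?_⟩
  rintro ⟨S, _, _, D, _, _, D', _, _, -, ⟨P₂, _, _, Q₂, _, _, hP₂, hQ₂, seS⟩, ⟨e, he⟩,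
    ⟨L, _, _, P₁, _, _, Q₁, _, _, -, hP₁, hQ₁, seML, seDL⟩⟩ H
  obtain ⟨ES⟩ := seS.nonempty_equivSES
  obtain ⟨EML⟩ := seML.nonempty_equivSES
  obtain ⟨EDL⟩ := seDL.nonempty_equivSES
  have hS : Sha2Trivial H S :=
    (ES.restrict H).sha2Trivial_left (hP₂.restrict H).sha2Trivial (hQ₂.restrict H).h1Trivial
  have hD : Sha2Trivial H D := hS.of_prod_addEquiv e (he.restrict H)
  have hL : Sha2Trivial H L := (EDL.restrict H).sha2Trivial_middle hD
    (hQ₁.restrict H).sha2Trivial fun g => ((hQ₁.restrict H).restrict _).h1Trivial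
  exact ((EML.restrict H).sha2Trivial_left hL (hP₁.restrict H).h1Trivial).eq_zero

theorem stmt_15 (G : Type) [Group G] [Finite G]
    (M P F : Type) [AddCommGroup M] [AddCommGroup P] [AddCommGroup F]
    [DistribMulAction G M] [DistribMulAction G P] [DistribMulAction G F]
    (hM : IsLat M) (hPperm : IsPermLat G P) (hF : IsLat F)
    (hFfl : IsFlasque G F) (se : ShortExactG G M P F) :
    Nonempty (H1 G F ≃+ Sha2 G M) ∧
    (IsEquivSummandQP G M → ∀ (H : Subgroup G) (x : Sha2 H M), x = 0) :=
  stmt_15_general G M P F hPperm hFfl se
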